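/- For all k, n ≥ 2, the Ramsey number of the star with k edges versus the complete graph on n vertices satisfies r(K_{1,k}, K_n) = k(n−1) + 1. -/

import Mathlib

open SimpleGraph

/-- `H` contains a copy of `G`, i.e. there is an injective graph homomorphism `G →g H`. -/
def ContainsCopy {α β : Type*} (G : SimpleGraph α) (H : SimpleGraph β) : Prop :=
  ∃ f : G →g H, Function.Injective f

/-- `F ⟶ (G, H)` : for every red-blue colouring of the edges of `F` (encoded by the red
subgraph `R ≤ F`, the blue edges being `F \ R`) there is a red copy of `G` or a blue copy
of `H`. -/
def Arrows {γ α β : Type*} (F : SimpleGraph γ) (G : SimpleGraph α) (H : SimpleGraph β) : Prop :=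
  ∀ R : SimpleGraph γ, R ≤ F → ContainsCopy G R ∨ ContainsCopy H (F \ R)

/-- The Ramsey number `r(G, H)` : the least `n` such that `K_n ⟶ (G, H)`. -/
noncomputable def ramseyNumber {α β : Type*} (G : SimpleGraph α) (H : SimpleGraph β) : ℕ :=
  sInf {n : ℕ | Arrows (⊤ : SimpleGraph (Fin n)) G H}

/-- The size Ramsey number `r̂(G, H)` : the least number of edges of a graph `F` with
`F ⟶ (G, H)`. -/
noncomputable def sizeRamsey {α β : Type*} (G : SimpleGraph α) (H : SimpleGraph β) : ℕ :=
  sInf {m : ℕ | ∃ (N : ℕ) (F : SimpleGraph (Fin N)), Arrows F G H ∧ F.edgeSet.ncard = m}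

/-- The restricted size Ramsey number `r̂*(G, H)` : the least number of edges of a graph `F`
on exactly `r(G, H)` vertices with `F ⟶ (G, H)`. -/
noncomputable def restrictedSizeRamsey {α β : Type*} (G : SimpleGraph α) (H : SimpleGraph β) : ℕ :=
  sInf {m : ℕ | ∃ F : SimpleGraph (Fin (ramseyNumber G H)),
    Arrows F G H ∧ F.edgeSet.ncard = m}

/-- The star `K_{1,k}` with `k` edges. -/
def starGraph (k : ℕ) : SimpleGraph (Fin 1 ⊕ Fin k) := completeBipartiteGraph (Fin 1) (Fin k)

/-!
Upper bound: if every red degree is below `k`, a maximum red-independent set `S` dominates the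
vertex set, so the `N` vertices are covered by the closed red neighbourhoods of `S` and
`N ≤ k * #S`; with `N > k(n-1)` this gives a blue `K_n`.
Lower bound: on `k(n-1)` vertices split into `n-1` blocks of size `k`, colour red the edges inside
blocks. A red star would put `k+1` vertices in one block, a blue `K_n` would need `n` blocks.
-/

namespace SimpleGraph

variable {V : Type*} (G : SimpleGraph V)

theorem exists_adj_of_notMem_of_isNIndepSet_indepNum [Finite V] {s : Finset V}
    (hs : G.IsNIndepSet G.indepNum s) {w : V} (hw : w ∉ s) : ∃ v ∈ s, G.Adj w v := by
  classical
  by_contra! h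
  have hind : G.IsIndepSet (insert w s : Finset V) := by
    rw [Finset.coe_insert, ← G.isClique_compl, isClique_insert]
    exact ⟨G.isClique_compl.mpr hs.isIndepSet, fun v hv hne => ⟨hne, h v hv⟩⟩
  have := hind.card_le_indepNum
  rw [Finset.card_insert_of_notMem hw, hs.card_eq] at this
  omega

theorem card_le_mul_indepNum [Fintype V] [DecidableRel G.Adj] :
    Fintype.card V ≤ (G.maxDegree + 1) * G.indepNum := by
  classical
  obtain ⟨s, hs⟩ := G.exists_isNIndepSet_indepNum
  have hcover : (Finset.univ : Finset V) ⊆ s.biUnion fun v => insert v (G.neighborFinset v) := by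
    intro w _
    by_cases hw : w ∈ s
    · exact Finset.mem_biUnion.mpr ⟨w, hw, Finset.mem_insert_self _ _⟩
    · obtain ⟨v, hv, hadj⟩ := G.exists_adj_of_notMem_of_isNIndepSet_indepNum hs hw
      exact Finset.mem_biUnion.mpr ⟨v, hv, Finset.mem_insert_of_mem (by simpa using hadj.symm)⟩
  calc Fintype.card V ≤ ∑ v ∈ s, Finset.card (insert v (G.neighborFinset v)) :=
        (Finset.card_le_card hcover).trans Finset.card_biUnion_le
    _ ≤ ∑ _v ∈ s, (G.maxDegree + 1) := Finset.sum_le_sum fun v _ =>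
        (Finset.card_insert_le _ _).trans (by simpa using G.degree_le_maxDegree v)
    _ = (G.maxDegree + 1) * G.indepNum := by
        rw [Finset.sum_const, hs.card_eq, smul_eq_mul, mul_comm]

theorem top_isContained_compl_of_le_indepNum {n : ℕ} (h : n ≤ G.indepNum) :
    (⊤ : SimpleGraph (Fin n)) ⊑ Gᶜ := by
  rw [← not_cliqueFree_iff_top_isContained]
  obtain ⟨s, hs⟩ := G.exists_isNIndepSet_indepNum
  exact fun hfree => hfree.mono h s (G.isNClique_compl.mpr hs)

theorem starGraph_isContained_of_le_degree [Fintype V] [DecidableRel G.Adj] {k : ℕ} {v : V}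
    (h : k ≤ G.degree v) :
    _root_.starGraph k ⊑ G := by
  rw [← card_neighborSet_eq_degree] at h
  let leaf : Fin k ↪ G.neighborSet v :=
    (Fin.castLEEmb h).trans (Fintype.equivFin (G.neighborSet v)).symm.toEmbedding
  refine ⟨⟨⟨Sum.elim (fun _ => v) (fun i => leaf i), ?_⟩, ?_⟩⟩
  · rintro (a | a) (b | b) hab <;> simp [_root_.starGraph] at hab ⊢
    · exact (leaf b).2
    · exact (leaf a).2.symm
  · rintro (a | a) (b | b) hab
    · simp [Subsingleton.elim a b]
    · have hadj := (leaf b).2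
      rw [mem_neighborSet, ← show v = leaf b from hab] at hadj
      exact (G.irrefl hadj).elim
    · have hadj := (leaf a).2
      rw [mem_neighborSet, show (leaf a : V) = v from hab] at hadj
      exact (G.irrefl hadj).elim
    · simpa using leaf.injective (Subtype.ext hab)

end SimpleGraph

theorem containsCopy_iff_isContained {α β : Type*} {G : SimpleGraph α} {H : SimpleGraph β} :
    ContainsCopy G H ↔ G ⊑ H :=
  ⟨fun ⟨f, hf⟩ => ⟨f.toCopy hf⟩, fun ⟨f⟩ => ⟨f.toHom, f.injective⟩⟩

theorem arrows_starGraph_top {V : Type*} [Fintype V] {k n : ℕ}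
    (hV : k * (n - 1) < Fintype.card V) :
    Arrows (⊤ : SimpleGraph V) (_root_.starGraph k) (⊤ : SimpleGraph (Fin n)) := by
  classical
  intro R _
  rw [containsCopy_iff_isContained, containsCopy_iff_isContained, top_sdiff]
  by_cases hdeg : k ≤ R.maxDegree
  · have : Nonempty V := Fintype.card_pos_iff.mp (by omega)
    obtain ⟨v, hv⟩ := R.exists_maximal_degree_vertex
    exact .inl (R.starGraph_isContained_of_le_degree (hv ▸ hdeg))
  · have hk : k * (n - 1) < k * R.indepNum :=
      calc k * (n - 1) < Fintype.card V := hV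
        _ ≤ (R.maxDegree + 1) * R.indepNum := R.card_le_mul_indepNum
        _ ≤ k * R.indepNum := Nat.mul_le_mul_right _ (by omega)
    have hn : n - 1 < R.indepNum := Nat.lt_of_mul_lt_mul_left hk
    exact .inr (R.top_isContained_compl_of_le_indepNum (by omega))

theorem not_arrows_starGraph_top_of_embedding {V ι : Type*} [Fintype ι] {k n : ℕ}
    (g : V ↪ ι × Fin k) (hι : Fintype.card ι < n) :
    ¬ Arrows (⊤ : SimpleGraph V) (_root_.starGraph k) (⊤ : SimpleGraph (Fin n)) := by
  intro h
  rcases h (fromRel fun x y => (g x).1 = (g y).1) le_top with ⟨f, hf⟩ | ⟨f, hf⟩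
  · have hblock : ∀ x, (g (f x)).1 = (g (f (.inl 0))).1 := by
      rintro (a | i)
      · rw [Subsingleton.elim a 0]
      · have hadj := f.map_adj (show (_root_.starGraph k).Adj (.inl 0) (.inr i) by
          simp [_root_.starGraph])
        exact (fromRel_adj _ _ _ |>.mp hadj).2.elim Eq.symm id
    have := Fintype.card_le_of_injective (fun x => (g (f x)).2) fun x y hxy =>
      hf (g.injective (Prod.ext ((hblock x).trans (hblock y).symm) hxy))
    simp at this
  · have := Fintype.card_le_of_injective (fun x => (g (f x)).1) fun x y hxy => by
      by_contra hne
      have hadj := f.map_adj ((top_adj x y).mpr hne)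
      rw [sdiff_adj, fromRel_adj] at hadj
      exact hadj.2 ⟨hadj.1.ne, .inl hxy⟩
    simp at this
    omega

theorem stmt16_general (k n : ℕ) (hn : 2 ≤ n) :
    ramseyNumber (_root_.starGraph k) (⊤ : SimpleGraph (Fin n)) = k*(n-1)+1 := by
  refine IsLeast.csInf_eq ⟨arrows_starGraph_top (by simp), fun m hm => ?_⟩
  by_contra! hm'
  have hle : m ≤ (n - 1) * k := by rw [Nat.mul_comm]; omega
  exact not_arrows_starGraph_top_of_embedding
    ((Fin.castLEEmb hle).trans finProdFinEquiv.symm.toEmbedding) (by simp; omega) hm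

theorem stmt16 (k n : ℕ) (hk : 2 ≤ k) (hn : 2 ≤ n) :
    ramseyNumber (_root_.starGraph k) (⊤ : SimpleGraph (Fin n)) = k*(n-1)+1 :=
  stmt16_general k n hn
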